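/- arXiv:2505.23245 — 5 statements merged into one kernel-verified Lean document; each statement's English description precedes it below -/
import Mathlib

section
/- Error characterization into residual and nonconformity (abstract form of Theorem 3.9): Let H be a real Hilbert space, V a closed subspace of H, u ∈ V, and u_h ∈ H arbitrary. Let A := {v ∈ H : v − u is orthogonal to every element of V}. Then ‖u − u_h‖² = (dist(u_h, A))² + (dist(u_h, V))², where dist(x, S) = inf_{s ∈ S} ‖x − s‖, and both infima are attained. -/
/-!
Write `P` for the orthogonal projection onto `V`. For any `x`, the distances from `x` to `V` and
to `Vᗮ` are the lengths of the two orthogonal components `x - P x` and `P x`, so Pythagoras gives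
`‖x‖² = dist(x, V)² + dist(x, Vᗮ)²`, the nearest points being `P x` and `x - P x`. The set `A` is
the translate `u + Vᗮ`, and since `u ∈ V` also `V = u + V`; translating by `-u` turns both
distances from `u_h` into distances from `x = u_h - u`.
-/

open Metric

theorem Metric.infDist_preimage_isometryEquiv {α β : Type*} [PseudoMetricSpace α]
    [PseudoMetricSpace β] (Φ : α ≃ᵢ β) (x : α) (s : Set β) :
    infDist x (Φ ⁻¹' s) = infDist (Φ x) s := by
  rw [← Φ.image_symm, ← infDist_image Φ.symm.isometry, Φ.symm_apply_apply]

theorem Metric.exists_mem_preimage_dist_eq_infDist {α β : Type*} [PseudoMetricSpace α]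
    [PseudoMetricSpace β] (Φ : α ≃ᵢ β) {x : α} {s : Set β}
    (h : ∃ y ∈ s, dist (Φ x) y = infDist (Φ x) s) :
    ∃ a ∈ Φ ⁻¹' s, dist x a = infDist x (Φ ⁻¹' s) := by
  obtain ⟨y, hy, hdist⟩ := h
  refine ⟨Φ.symm y, by simpa using hy, ?_⟩
  rw [infDist_preimage_isometryEquiv, ← hdist, ← Φ.dist_eq, Φ.apply_symm_apply]

namespace Submodule

variable {𝕜 E : Type*} [RCLike 𝕜] [NormedAddCommGroup E] [InnerProductSpace 𝕜 E]
  (K : Submodule 𝕜 E) [K.HasOrthogonalProjection] (x : E)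

theorem infDist_eq_norm_sub_starProjection :
    infDist x K = ‖x - K.starProjection x‖ := by
  rw [starProjection_minimal, infDist_eq_iInf]
  simp only [dist_eq_norm]
  rfl

theorem exists_mem_dist_eq_infDist : ∃ y ∈ (K : Set E), dist x y = infDist x K :=
  ⟨K.starProjection x, K.starProjection_apply_mem x, by
    rw [dist_eq_norm, infDist_eq_norm_sub_starProjection]⟩

theorem norm_sq_eq_infDist_sq_add_infDist_orthogonal_sq :
    ‖x‖ ^ 2 = infDist x K ^ 2 + infDist x Kᗮ ^ 2 := by
  have hK : infDist x K = ‖Kᗮ.starProjection x‖ := by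
    rw [infDist_eq_norm_sub_starProjection, starProjection_orthogonal_val]
  have hKperp : infDist x Kᗮ = ‖K.starProjection x‖ := by
    rw [infDist_eq_norm_sub_starProjection, starProjection_orthogonal_val, sub_sub_cancel]
  rw [hK, hKperp, add_comm]
  simpa only [starProjection_apply, norm_coe] using norm_sq_eq_add_norm_sq_projection x K

end Submodule

/-- Error characterization into residual and nonconformity: with
`A = {v | v - u ⊥ V}`, one has `‖u - u_h‖² = dist(u_h, A)² + dist(u_h, V)²`,
and both infima (distances) are attained. -/
theorem error_characterization
    {H : Type*} [NormedAddCommGroup H] [InnerProductSpace ℝ H] [CompleteSpace H]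
    (V : Submodule ℝ H) (hV : IsClosed (V : Set H))
    (u : H) (hu : u ∈ V) (uh : H) :
    ‖u - uh‖ ^ 2 =
        Metric.infDist uh {v : H | ∀ w ∈ V, (inner ℝ (v - u) w : ℝ) = 0} ^ 2 +
          Metric.infDist uh (V : Set H) ^ 2 ∧
      (∃ a ∈ {v : H | ∀ w ∈ V, (inner ℝ (v - u) w : ℝ) = 0},
        dist uh a = Metric.infDist uh {v : H | ∀ w ∈ V, (inner ℝ (v - u) w : ℝ) = 0}) ∧
      (∃ v ∈ (V : Set H), dist uh v = Metric.infDist uh (V : Set H)) := by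
  have : CompleteSpace V := hV.completeSpace_coe
  set Φ := IsometryEquiv.subRight u
  have hA : {v : H | ∀ w ∈ V, (inner ℝ (v - u) w : ℝ) = 0} = Φ ⁻¹' Vᗮ := by
    ext v
    simp [Φ, Submodule.mem_orthogonal']
  have hV' : (V : Set H) = Φ ⁻¹' V := by
    ext v
    simp [Φ, V.sub_mem_iff_left hu]
  rw [hA, hV']
  refine ⟨?_, exists_mem_preimage_dist_eq_infDist Φ (Vᗮ.exists_mem_dist_eq_infDist _),
    exists_mem_preimage_dist_eq_infDist Φ (V.exists_mem_dist_eq_infDist _)⟩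
  rw [infDist_preimage_isometryEquiv, infDist_preimage_isometryEquiv, add_comm, norm_sub_rev]
  exact V.norm_sq_eq_infDist_sq_add_infDist_orthogonal_sq (uh - u)
end

section
/- Strong monotonicity of the prototype vector field (property (5.3a) for example (5.5)): Let c, C ∈ ℝ with 0 < c ≤ C, let d ≥ 1, and define k̃(r) = c + (C − c)/√(1 + r²) and F : ℝ^d → ℝ^d by F(v) = k̃(|v|)·v, where |·| and ⟪·,·⟫ are the Euclidean norm and inner product on ℝ^d. Then for all v, w ∈ ℝ^d one has c·|v − w|² ≤ ⟪v − w, F(v) − F(w)⟫. -/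
/-! A radial field `v ↦ g(|v|) • v` with `g ≥ 0` is monotone as soon as `r ↦ r g(r)` is
nondecreasing: by Cauchy–Schwarz, `⟪v - w, g(|v|) v - g(|w|) w⟫` is bounded below by
`(|v| - |w|)(|v| g(|v|) - |w| g(|w|))`. The prototype field is `c • id` plus such a field with
`g(r) = (C - c)/√(1 + r²)`, and `r/√(1 + r²)` is increasing since
`x²(1 + y²) ≤ y²(1 + x²)` whenever `x² ≤ y²`. -/

open Real Set

theorem monotoneOn_div_sqrt_one_add_sq : MonotoneOn (fun r : ℝ => r / √(1 + r ^ 2)) (Ici 0) := by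
  intro x (hx : 0 ≤ x) y (hy : 0 ≤ y) hxy
  have hsx : 0 < √(1 + x ^ 2) := sqrt_pos.2 (by positivity)
  have hsy : 0 < √(1 + y ^ 2) := sqrt_pos.2 (by positivity)
  rw [div_le_div_iff₀ hsx hsy]
  have hsq : (x * √(1 + y ^ 2)) ^ 2 ≤ (y * √(1 + x ^ 2)) ^ 2 := by
    rw [mul_pow, mul_pow, sq_sqrt (by positivity), sq_sqrt (by positivity)]
    nlinarith [pow_le_pow_left₀ hx hxy 2]
  exact (pow_le_pow_iff_left₀ (by positivity) (by positivity) two_ne_zero).1 hsq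

section RadialField

variable {E : Type*} [NormedAddCommGroup E] [InnerProductSpace ℝ E]

theorem inner_sub_smul_sub_smul_ge (a b : ℝ) (ha : 0 ≤ a) (hb : 0 ≤ b) (v w : E) :
    (‖v‖ - ‖w‖) * (‖v‖ * a - ‖w‖ * b) ≤ inner ℝ (v - w) (a • v - b • w) := by
  have hvw : inner ℝ v w ≤ ‖v‖ * ‖w‖ := real_inner_le_norm v w
  rw [inner_sub_left, inner_sub_right, inner_sub_right, real_inner_smul_right,
    real_inner_smul_right, real_inner_smul_right, real_inner_smul_right,
    real_inner_self_eq_norm_sq, real_inner_self_eq_norm_sq, real_inner_comm v w]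
  nlinarith [mul_le_mul_of_nonneg_left hvw (add_nonneg ha hb)]

theorem inner_sub_radial_field_nonneg {g : ℝ → ℝ} (hg : ∀ r, 0 ≤ r → 0 ≤ g r)
    (hmono : MonotoneOn (fun r => r * g r) (Ici 0)) (v w : E) :
    0 ≤ inner ℝ (v - w) (g ‖v‖ • v - g ‖w‖ • w) := by
  have hnorm : 0 ≤ (‖v‖ - ‖w‖) * (‖v‖ * g ‖v‖ - ‖w‖ * g ‖w‖) :=
    (monotoneOn_id.monovaryOn hmono).sub_mul_sub_nonneg
      (mem_Ici.2 (norm_nonneg w)) (mem_Ici.2 (norm_nonneg v))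
  exact hnorm.trans <|
    inner_sub_smul_sub_smul_ge _ _ (hg _ (norm_nonneg v)) (hg _ (norm_nonneg w)) v w

end RadialField

theorem prototype_field_strong_monotonicity_general
    (c C : ℝ) (hcC : c ≤ C) (d : ℕ)
    (v w : EuclideanSpace ℝ (Fin d)) :
    c * ‖v - w‖ ^ 2 ≤
      (inner ℝ (v - w)
        ((c + (C - c) / Real.sqrt (1 + ‖v‖ ^ 2)) • v -
          (c + (C - c) / Real.sqrt (1 + ‖w‖ ^ 2)) • w) : ℝ) := by
  set g : ℝ → ℝ := fun r => (C - c) / √(1 + r ^ 2)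
  have hg : ∀ r, 0 ≤ r → 0 ≤ g r := fun r _ => div_nonneg (sub_nonneg.2 hcC) (sqrt_nonneg _)
  have hmono : MonotoneOn (fun r => r * g r) (Ici 0) := by
    intro x hx y hy hxy
    simp only [g, mul_div_left_comm _ (C - c)]
    exact mul_le_mul_of_nonneg_left (monotoneOn_div_sqrt_one_add_sq hx hy hxy) (sub_nonneg.2 hcC)
  have hsplit : (c + g ‖v‖) • v - (c + g ‖w‖) • w = c • (v - w) + (g ‖v‖ • v - g ‖w‖ • w) := by
    module
  rw [hsplit, inner_add_right, real_inner_smul_right, real_inner_self_eq_norm_sq]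
  linarith [inner_sub_radial_field_nonneg hg hmono v w]

/-- Strong monotonicity of the prototype vector field `F(v) = k̃(|v|)·v` with
`k̃(r) = c + (C − c)/√(1 + r²)`: for all `v, w`, `c·|v − w|² ≤ ⟪v − w, F(v) − F(w)⟫`. -/
theorem prototype_field_strong_monotonicity
    (c C : ℝ) (hc : 0 < c) (hcC : c ≤ C) (d : ℕ) (hd : 1 ≤ d)
    (v w : EuclideanSpace ℝ (Fin d)) :
    c * ‖v - w‖ ^ 2 ≤
      (inner ℝ (v - w)
        ((c + (C - c) / Real.sqrt (1 + ‖v‖ ^ 2)) • v -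
          (c + (C - c) / Real.sqrt (1 + ‖w‖ ^ 2)) • w) : ℝ) :=
  prototype_field_strong_monotonicity_general c C hcC d v w
end

section
/- Lipschitz continuity of the prototype vector field (property (5.3b) for example (5.5)): Let c, C ∈ ℝ with 0 < c ≤ C, let d ≥ 1, and define k̃(r) = c + (C − c)/√(1 + r²) and F : ℝ^d → ℝ^d by F(v) = k̃(|v|)·v, where |·| is the Euclidean norm on ℝ^d. Then for all v, w ∈ ℝ^d one has |F(v) − F(w)| ≤ C·|v − w|. -/
/-!
Write `F(v) = c • v + (C - c) • G(v)` with `G(v) = v / √(1 + |v|²)`; it suffices that `G` is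
1-Lipschitz. Now `G(v)` is the first component of the radial projection `x / |x|` of the lifted
point `x = (v, 1) ∈ ℝ^d × ℝ`, and radial projection is 1-Lipschitz outside the open unit ball,
while the lift is an isometry and the first-component map is a contraction.
-/

theorem norm_toLp_prod_one {F : Type*} [SeminormedAddCommGroup F] (v : F) :
    ‖WithLp.toLp 2 (v, (1 : ℝ))‖ = √(1 + ‖v‖ ^ 2) := by
  rw [WithLp.prod_norm_eq_of_L2]
  simp [add_comm]

section

variable {E : Type*} [NormedAddCommGroup E] [InnerProductSpace ℝ E]

theorem norm_inv_norm_smul_sub_le {x y : E} (hx : 1 ≤ ‖x‖) (hy : 1 ≤ ‖y‖) :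
    ‖‖x‖⁻¹ • x - ‖y‖⁻¹ • y‖ ≤ ‖x - y‖ := by
  set a := ‖x‖
  set b := ‖y‖
  set s := inner ℝ x y
  have ha : 0 < a := zero_lt_one.trans_le hx
  have hb : 0 < b := zero_lt_one.trans_le hy
  have hs : s ≤ a * b := real_inner_le_norm x y
  have hab : 1 ≤ a * b := one_le_mul_of_one_le_of_one_le hx hy
  have h_proj : ‖a⁻¹ • x - b⁻¹ • y‖ ^ 2 = 2 - 2 * s / (a * b) := by
    rw [norm_sub_sq_real, norm_smul, norm_smul, real_inner_smul_left, real_inner_smul_right,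
      Real.norm_of_nonneg (inv_nonneg.2 ha.le), Real.norm_of_nonneg (inv_nonneg.2 hb.le)]
    field_simp
    ring
  have h_gap : ‖x - y‖ ^ 2 - ‖a⁻¹ • x - b⁻¹ • y‖ ^ 2
      = (a - b) ^ 2 + 2 * ((a * b - s) * (1 - 1 / (a * b))) := by
    rw [h_proj, norm_sub_sq_real]
    field_simp
    ring
  have h_gap_nonneg : 0 ≤ (a * b - s) * (1 - 1 / (a * b)) :=
    mul_nonneg (sub_nonneg.2 hs) (sub_nonneg.2 ((div_le_one (by positivity)).2 hab))
  refine (sq_le_sq₀ (norm_nonneg _) (norm_nonneg _)).1 ?_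
  nlinarith [sq_nonneg (a - b)]

theorem lipschitzWith_inv_sqrt_one_add_norm_sq_smul :
    LipschitzWith 1 fun v : E ↦ (√(1 + ‖v‖ ^ 2))⁻¹ • v := by
  refine LipschitzWith.of_dist_le_mul fun v w ↦ ?_
  let lift : E → WithLp 2 (E × ℝ) := fun u ↦ WithLp.toLp 2 (u, 1)
  have h_one_le (u : E) : 1 ≤ ‖lift u‖ := by
    rw [norm_toLp_prod_one, Real.one_le_sqrt]
    exact le_add_of_nonneg_right (sq_nonneg _)
  have h_fst (u : E) : (‖lift u‖⁻¹ • lift u).fst = (√(1 + ‖u‖ ^ 2))⁻¹ • u := by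
    simp [lift, norm_toLp_prod_one]
  have h_isometry : ‖lift v - lift w‖ = ‖v - w‖ := by
    rw [WithLp.prod_norm_eq_of_L2]
    simp [lift]
  simp only [NNReal.coe_one, one_mul, dist_eq_norm]
  calc ‖(√(1 + ‖v‖ ^ 2))⁻¹ • v - (√(1 + ‖w‖ ^ 2))⁻¹ • w‖
      = ‖(‖lift v‖⁻¹ • lift v - ‖lift w‖⁻¹ • lift w).fst‖ := by
        rw [WithLp.sub_fst, h_fst, h_fst]
    _ ≤ ‖‖lift v‖⁻¹ • lift v - ‖lift w‖⁻¹ • lift w‖ := WithLp.norm_fst_le E _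
    _ ≤ ‖lift v - lift w‖ := norm_inv_norm_smul_sub_le (h_one_le v) (h_one_le w)
    _ = ‖v - w‖ := h_isometry

end

theorem prototype_field_lipschitz_general
    (c C : ℝ) (hc : 0 < c) (hcC : c ≤ C) (d : ℕ)
    (v w : EuclideanSpace ℝ (Fin d)) :
    ‖(c + (C - c) / Real.sqrt (1 + ‖v‖ ^ 2)) • v -
        (c + (C - c) / Real.sqrt (1 + ‖w‖ ^ 2)) • w‖ ≤ C * ‖v - w‖ := by
  set G : EuclideanSpace ℝ (Fin d) → EuclideanSpace ℝ (Fin d) :=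
    fun u ↦ (√(1 + ‖u‖ ^ 2))⁻¹ • u
  have h_split : (c + (C - c) / √(1 + ‖v‖ ^ 2)) • v - (c + (C - c) / √(1 + ‖w‖ ^ 2)) • w
      = c • (v - w) + (C - c) • (G v - G w) := by
    simp only [G, div_eq_mul_inv]
    module
  have hG : ‖G v - G w‖ ≤ ‖v - w‖ := by
    simpa using lipschitzWith_inv_sqrt_one_add_norm_sq_smul.norm_sub_le v w
  calc _ = ‖c • (v - w) + (C - c) • (G v - G w)‖ := by rw [h_split]
    _ ≤ c * ‖v - w‖ + (C - c) * ‖G v - G w‖ := by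
      refine (norm_add_le _ _).trans_eq ?_
      rw [norm_smul, norm_smul, Real.norm_of_nonneg hc.le, Real.norm_of_nonneg (sub_nonneg.2 hcC)]
    _ ≤ c * ‖v - w‖ + (C - c) * ‖v - w‖ := by gcongr
    _ = C * ‖v - w‖ := by ring

/-- Lipschitz continuity of the prototype vector field `F(v) = k̃(|v|)·v` with
`k̃(r) = c + (C − c)/√(1 + r²)`: for all `v, w`, `|F(v) − F(w)| ≤ C·|v − w|`. -/
theorem prototype_field_lipschitz
    (c C : ℝ) (hc : 0 < c) (hcC : c ≤ C) (d : ℕ) (hd : 1 ≤ d)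
    (v w : EuclideanSpace ℝ (Fin d)) :
    ‖(c + (C - c) / Real.sqrt (1 + ‖v‖ ^ 2)) • v -
        (c + (C - c) / Real.sqrt (1 + ‖w‖ ^ 2)) • w‖ ≤ C * ‖v - w‖ :=
  prototype_field_lipschitz_general c C hc hcC d v w
end

section
/- Residual bound for the auxiliary nonlinear projection (abstract form of the bound (5.23) in the proof of Theorem 5.6): Let H be a real Hilbert space, V a closed subspace of H with orthogonal projection P_V, c, C ∈ ℝ with 0 < c ≤ C, and Ψ : H → H a map such that for all x, y ∈ H, c‖x − y‖² ≤ ⟪x − y, Ψ(x) − Ψ(y)⟫ and ‖Ψ(x) − Ψ(y)‖ ≤ C‖x − y‖. Let u, ζ, u_h ∈ H with Ψ(u) ∈ V, Ψ(ζ) ∈ V, and ζ − u_h orthogonal to every element of V. Then √c · ‖u − ζ‖ ≤ (C/√c) · ‖P_V(u − u_h)‖. -/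
/-!
Test the strong monotonicity of `Ψ` with `g = Ψ u - Ψ ζ ∈ V`. Since `ζ - u_h ⊥ V`, the pairing
`⟪u - ζ, g⟫` only sees `P_V (u - u_h)`, so Cauchy–Schwarz and the Lipschitz bound give
`c ‖u - ζ‖² ≤ C ‖u - ζ‖ ‖P_V (u - u_h)‖`.
-/

open RealInnerProductSpace

section

variable {E : Type*} [NormedAddCommGroup E] [InnerProductSpace ℝ E]

theorem mul_norm_le_mul_norm_of_inner_eq {d g p : E} {c C : ℝ} (hC : 0 ≤ C)
    (hmono : c * ‖d‖ ^ 2 ≤ ⟪d, g⟫) (hlip : ‖g‖ ≤ C * ‖d‖) (heq : ⟪d, g⟫ = ⟪p, g⟫) :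
    c * ‖d‖ ≤ C * ‖p‖ := by
  have hsq : c * ‖d‖ * ‖d‖ ≤ C * ‖p‖ * ‖d‖ :=
    calc c * ‖d‖ * ‖d‖ = c * ‖d‖ ^ 2 := by ring
      _ ≤ ⟪p, g⟫ := heq ▸ hmono
      _ ≤ ‖p‖ * ‖g‖ := real_inner_le_norm p g
      _ ≤ ‖p‖ * (C * ‖d‖) := by gcongr
      _ = C * ‖p‖ * ‖d‖ := by ring
  rcases (norm_nonneg d).eq_or_lt with hd | hd
  · rw [← hd, mul_zero]
    positivity
  · exact le_of_mul_le_mul_right hsq hd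

theorem Submodule.inner_sub_eq_inner_orthogonalProjectionOnto (V : Submodule ℝ E)
    [V.HasOrthogonalProjection] {u ζ uh g : E} (horth : ζ - uh ∈ Vᗮ) (hg : g ∈ V) :
    ⟪u - ζ, g⟫ = ⟪(V.orthogonalProjectionOnto (u - uh) : E), g⟫ := by
  have hζ : ⟪ζ - uh, g⟫ = 0 := (V.mem_orthogonal' _).1 horth g hg
  calc ⟪u - ζ, g⟫ = ⟪u - uh, g⟫ - ⟪ζ - uh, g⟫ := by rw [← inner_sub_left, sub_sub_sub_cancel_right]
    _ = ⟪(V.orthogonalProjectionOnto (u - uh) : E), g⟫ := by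
      rw [hζ, sub_zero, ← V.starProjection_apply, V.inner_starProjection_left_eq_right,
        V.starProjection_eq_self_iff.2 hg]

end

theorem Real.sqrt_mul_le_div_sqrt_mul {a b c C : ℝ} (hc : 0 < c) (h : c * a ≤ C * b) :
    √c * a ≤ C / √c * b := by
  rwa [div_mul_eq_mul_div, le_div_iff₀ (Real.sqrt_pos.2 hc), mul_right_comm,
    Real.mul_self_sqrt hc.le]

theorem auxiliary_projection_residual_bound_general
    {H : Type*} [NormedAddCommGroup H] [InnerProductSpace ℝ H]
    (V : Submodule ℝ H) [CompleteSpace V]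
    (c C : ℝ) (hc : 0 < c) (hcC : c ≤ C) (Ψ : H → H)
    (hmono : ∀ x y : H, c * ‖x - y‖ ^ 2 ≤ (inner ℝ (x - y) (Ψ x - Ψ y) : ℝ))
    (hlip : ∀ x y : H, ‖Ψ x - Ψ y‖ ≤ C * ‖x - y‖)
    (u ζ uh : H) (hu : Ψ u ∈ V) (hζ : Ψ ζ ∈ V)
    (horth : ∀ w ∈ V, (inner ℝ (ζ - uh) w : ℝ) = 0) :
    Real.sqrt c * ‖u - ζ‖ ≤
      (C / Real.sqrt c) * ‖(V.orthogonalProjection (u - uh) : H)‖ := by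
  have hgalerkin := V.inner_sub_eq_inner_orthogonalProjectionOnto (u := u)
    ((V.mem_orthogonal' _).2 horth) (V.sub_mem hu hζ)
  exact Real.sqrt_mul_le_div_sqrt_mul hc <|
    mul_norm_le_mul_norm_of_inner_eq (hc.le.trans hcC) (hmono u ζ) (hlip u ζ) hgalerkin

/-- Residual bound for the auxiliary nonlinear projection:
`√c · ‖u − ζ‖ ≤ (C/√c) · ‖P_V (u − u_h)‖`. -/
theorem auxiliary_projection_residual_bound
    {H : Type*} [NormedAddCommGroup H] [InnerProductSpace ℝ H] [CompleteSpace H]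
    (V : Submodule ℝ H) [CompleteSpace V]
    (c C : ℝ) (hc : 0 < c) (hcC : c ≤ C) (Ψ : H → H)
    (hmono : ∀ x y : H, c * ‖x - y‖ ^ 2 ≤ (inner ℝ (x - y) (Ψ x - Ψ y) : ℝ))
    (hlip : ∀ x y : H, ‖Ψ x - Ψ y‖ ≤ C * ‖x - y‖)
    (u ζ uh : H) (hu : Ψ u ∈ V) (hζ : Ψ ζ ∈ V)
    (horth : ∀ w ∈ V, (inner ℝ (ζ - uh) w : ℝ) = 0) :
    Real.sqrt c * ‖u - ζ‖ ≤
      (C / Real.sqrt c) * ‖(V.orthogonalProjection (u - uh) : H)‖ :=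
  auxiliary_projection_residual_bound_general V c C hc hcC Ψ hmono hlip u ζ uh hu hζ horth
end

section
/- Nonconformity bound for the auxiliary nonlinear projection (abstract form of the bound (5.27) in the proof of Theorem 5.6): Let H be a real Hilbert space, V a closed subspace of H, c ∈ ℝ with c > 0, and Ψ : H → H a map such that for all x, y ∈ H, c‖x − y‖² ≤ ⟪x − y, Ψ(x) − Ψ(y)⟫. Let ζ, u_h ∈ H with Ψ(ζ) ∈ V and ζ − u_h orthogonal to every element of V. Then √c · ‖ζ − u_h‖ ≤ (1/√c) · inf_{v ∈ V} ‖Ψ(u_h) − v‖. -/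
/-!
Put `e = ζ - u_h`. Since `Ψ ζ ∈ V` and `e ⊥ V`, for every `v ∈ V` strong monotonicity gives
`c ‖e‖² ≤ ⟪e, Ψ ζ - Ψ u_h⟫ = ⟪e, v - Ψ u_h⟫ ≤ ‖e‖ ‖Ψ u_h - v‖`, hence `c ‖e‖ ≤ dist (Ψ u_h) V`,
and dividing by `√c` gives the bound.
-/

open Metric RealInnerProductSpace

section

variable {H : Type*} [NormedAddCommGroup H] [InnerProductSpace ℝ H]

theorem mul_norm_le_norm_of_mul_sq_le_inner {c : ℝ} {x y : H}
    (h : c * ‖x‖ ^ 2 ≤ ⟪x, y⟫) : c * ‖x‖ ≤ ‖y‖ := by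
  rcases (norm_nonneg x).eq_or_lt with hx | hx
  · simp [← hx]
  · refine le_of_mul_le_mul_right ?_ hx
    calc c * ‖x‖ * ‖x‖ = c * ‖x‖ ^ 2 := by ring
      _ ≤ ⟪x, y⟫ := h
      _ ≤ ‖x‖ * ‖y‖ := real_inner_le_norm x y
      _ = ‖y‖ * ‖x‖ := mul_comm _ _

theorem mul_norm_le_infDist_of_mul_sq_le_inner {V : Submodule ℝ H} {c : ℝ} {e a b : H}
    (h : c * ‖e‖ ^ 2 ≤ ⟪e, a - b⟫) (ha : a ∈ V) (he : ∀ w ∈ V, ⟪e, w⟫ = 0) :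
    c * ‖e‖ ≤ infDist b (V : Set H) := by
  rw [le_infDist ⟨0, V.zero_mem⟩]
  intro v hv
  rw [dist_comm, dist_eq_norm]
  apply mul_norm_le_norm_of_mul_sq_le_inner
  calc c * ‖e‖ ^ 2 ≤ ⟪e, a - b⟫ := h
    _ = ⟪e, a - v⟫ + ⟪e, v - b⟫ := by rw [← inner_add_right, sub_add_sub_cancel]
    _ = ⟪e, v - b⟫ := by rw [he _ (V.sub_mem ha hv), zero_add]

end

theorem auxiliary_projection_nonconformity_bound_general
    {H : Type*} [NormedAddCommGroup H] [InnerProductSpace ℝ H]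
    (V : Submodule ℝ H)
    (c : ℝ) (Ψ : H → H)
    (hmono : ∀ x y : H, c * ‖x - y‖ ^ 2 ≤ (inner ℝ (x - y) (Ψ x - Ψ y) : ℝ))
    (ζ uh : H) (hζ : Ψ ζ ∈ V)
    (horth : ∀ w ∈ V, (inner ℝ (ζ - uh) w : ℝ) = 0) :
    Real.sqrt c * ‖ζ - uh‖ ≤
      (1 / Real.sqrt c) * Metric.infDist (Ψ uh) (V : Set H) := by
  have hdist : c * ‖ζ - uh‖ ≤ infDist (Ψ uh) (V : Set H) :=
    mul_norm_le_infDist_of_mul_sq_le_inner (hmono ζ uh) hζ horth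
  -- `c / √c = √c` holds for every real `c`: for `c ≤ 0` both sides are `0`.
  calc Real.sqrt c * ‖ζ - uh‖ = 1 / Real.sqrt c * (c * ‖ζ - uh‖) := by
        rw [← mul_assoc, one_div_mul_eq_div, Real.div_sqrt]
    _ ≤ 1 / Real.sqrt c * infDist (Ψ uh) (V : Set H) := by gcongr

/-- Nonconformity bound for the auxiliary nonlinear projection:
`√c · ‖ζ − u_h‖ ≤ (1/√c) · inf_{v ∈ V} ‖Ψ(u_h) − v‖`. -/
theorem auxiliary_projection_nonconformity_bound
    {H : Type*} [NormedAddCommGroup H] [InnerProductSpace ℝ H] [CompleteSpace H]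
    (V : Submodule ℝ H) (hV : IsClosed (V : Set H))
    (c : ℝ) (hc : 0 < c) (Ψ : H → H)
    (hmono : ∀ x y : H, c * ‖x - y‖ ^ 2 ≤ (inner ℝ (x - y) (Ψ x - Ψ y) : ℝ))
    (ζ uh : H) (hζ : Ψ ζ ∈ V)
    (horth : ∀ w ∈ V, (inner ℝ (ζ - uh) w : ℝ) = 0) :
    Real.sqrt c * ‖ζ - uh‖ ≤
      (1 / Real.sqrt c) * Metric.infDist (Ψ uh) (V : Set H) :=
  auxiliary_projection_nonconformity_bound_general V c Ψ hmono ζ uh hζ horth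
end
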